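/- Let θ be a partial action of an inverse semigroupoid S on X and (E,η) the globalization constructed as the quotient of D = {(s,x) : x ∈ X_{s*s}} by ≈, with S-function i : X → E sending x to [e,x] for any idempotent e with x ∈ X_e. Then i is injective, and the action η induces θ through i: for x, y ∈ X and s ∈ S, if i(x) ∈ E_{s*} and η_s(i(x)) = i(y), then x ∈ X_{s*} and θ_s(x) = y. Hence (i, E, η) is a globalization of (X, θ). -/

import Mathlib

structure InvSgpd (S : Type*) (O : Type*) where
  d : S → O
  c : S → O
  mul : S → S → S
  d_mul : ∀ s t, d s = c t → d (mul s t) = d t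
  c_mul : ∀ s t, d s = c t → c (mul s t) = c s
  assoc : ∀ p s t, d p = c s → d s = c t → mul (mul p s) t = mul p (mul s t)
  inv : S → S
  comp_inv : ∀ s, d s = c (inv s)
  inv_comp : ∀ s, d (inv s) = c s
  mul_inv_mul : ∀ s, mul (mul s (inv s)) s = s
  inv_mul_inv : ∀ s, mul (mul (inv s) s) (inv s) = inv s
  inv_unique : ∀ s t, d s = c t → d t = c s →
    mul (mul s t) s = s → mul (mul t s) t = t → t = inv s

namespace InvSgpd
variable {S O : Type*} (G : InvSgpd S O)
def Composable (s t : S) : Prop := G.d s = G.c t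
def Idem (e : S) : Prop := G.Composable e e ∧ G.mul e e = e
def le (s t : S) : Prop :=
  G.d s = G.d t ∧ G.c s = G.c t ∧ s = G.mul t (G.mul (G.inv s) s)
end InvSgpd

/-- A partial action of an inverse semigroupoid `G` on a set (type) `X`:
`dom s` plays the role of `X_s` and `act s` the role of `θ_s : X_{s*} → X_s`
(as a total map whose values are only relevant on `dom (G.inv s)`). -/
structure PAction {S O : Type*} (G : InvSgpd S O) (X : Type*) where
  dom : S → Set X
  act : S → X → X
  maps : ∀ s, ∀ x ∈ dom (G.inv s), act s x ∈ dom s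
  /-- (P1) `θ_e = id_{X_e}` for idempotents. -/
  idem_id : ∀ e, G.Idem e → ∀ x ∈ dom e, act e x = x
  /-- (P1) every point lies in some `X_e` with `e` idempotent. -/
  cover : ∀ x : X, ∃ e, G.Idem e ∧ x ∈ dom e
  /-- (P2) `X_s ⊆ X_{ss*}`. -/
  dom_mono : ∀ s, dom s ⊆ dom (G.mul s (G.inv s))
  /-- (P3) `θ_t⁻¹(X_t ∩ X_{s*}) = X_{(st)*} ∩ X_{t*}` for composable `(s,t)`. -/
  preimage_eq : ∀ s t, G.Composable s t →
    {x | x ∈ dom (G.inv t) ∧ act t x ∈ dom t ∩ dom (G.inv s)}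
      = dom (G.inv (G.mul s t)) ∩ dom (G.inv t)
  /-- (P3) `θ_s (θ_t x) = θ_{st} x` on `X_{(st)*} ∩ X_{t*}`. -/
  mul_act : ∀ s t, G.Composable s t →
    ∀ x ∈ dom (G.inv (G.mul s t)) ∩ dom (G.inv t),
      act s (act t x) = act (G.mul s t) x

namespace PAction
variable {S O X : Type*} {G : InvSgpd S O}

/-- A partial action is global when `X_s = X_{ss*}` for every `s`. -/
def IsGlobal (θ : PAction G X) : Prop := ∀ s, θ.dom s = θ.dom (G.mul s (G.inv s))

end PAction

namespace PAction
variable {S O X : Type*} {G : InvSgpd S O} (θ : PAction G X)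

/-- The set `D = {(s,x) ∈ S × X : x ∈ X_{s*s}}`. -/
def Dset : Type _ := {p : S × X // p.2 ∈ θ.dom (G.mul (G.inv p.1) p.1)}

/-- The relation `∼` on `D`: `(s,x) ∼ (t,y)` iff
(R1) `(t*,s)` is composable, `x ∈ X_{s*t}` and `θ_{t*s}(x) = y`, or
(R2) `s` and `t` are idempotents and `x = y`. -/
def rel (p q : θ.Dset) : Prop :=
  (G.Composable (G.inv q.1.1) p.1.1 ∧
      p.1.2 ∈ θ.dom (G.mul (G.inv p.1.1) q.1.1) ∧
      θ.act (G.mul (G.inv q.1.1) p.1.1) p.1.2 = q.1.2) ∨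
    (G.Idem p.1.1 ∧ G.Idem q.1.1 ∧ p.1.2 = q.1.2)

end PAction

namespace PAction
variable {S O X : Type*} {G : InvSgpd S O} (θ : PAction G X)

/-- The equivalence relation `≈` on `D` generated by `∼`. -/
def relSetoid : Setoid θ.Dset :=
  ⟨Relation.EqvGen θ.rel, Relation.EqvGen.is_equivalence _⟩

/-- `E = D/≈`, the carrier of the constructed globalization. -/
def Env : Type _ := Quotient θ.relSetoid

/-- `E_s`: the image under the quotient map of
`D_s = {(p,x) ∈ D : (s*,p) composable, x ∈ X_{p* s s* p}}`. -/
def Eset (s : S) : Set θ.Env :=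
  {c | ∃ p : θ.Dset, Quotient.mk θ.relSetoid p = c ∧
    G.Composable (G.inv s) p.1.1 ∧
    p.1.2 ∈ θ.dom (G.mul (G.inv p.1.1) (G.mul (G.mul s (G.inv s)) p.1.1))}

end PAction

/-! The partial evaluation `[s, x] ↦ θ_s(x)`, defined iff `x ∈ X_{s*}`, is invariant under `∼`
and hence well defined on `E`; at `i(y) = [f, y]` it is defined with value `y`. So `[s, x] = i(y)`
says exactly that `θ_s(x)` is defined and equals `y`, which is the injectivity of `i` when `s` is
idempotent. For the second claim write `i(x) = [p, z]` with `(p, z) ∈ D_{s*}`: then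
`η_s(i(x)) = [sp, z] = i(y)` gives `θ_p(z) = x` and `θ_{sp}(z) = y`, and (P3) turns these into
`x ∈ X_{s*}` and `θ_s(x) = y`.

The invariance under `∼` uses `(t*s)* = s*t`. This holds because `S` with a zero adjoined is an
inverse semigroup, in which idempotents commute. -/

structure IsUniqueInverse {M : Type*} [Semigroup M] (ι : M → M) : Prop where
  mul_inv_mul : ∀ a, a * ι a * a = a
  inv_mul_inv : ∀ a, ι a * a * ι a = ι a
  eq_inv : ∀ a b, a * b * a = a → b * a * b = b → b = ι a

namespace IsUniqueInverse
variable {M : Type*} [Semigroup M] {ι : M → M}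

theorem inv_inv (h : IsUniqueInverse ι) (a : M) : ι (ι a) = a :=
  (h.eq_inv _ _ (h.inv_mul_inv a) (h.mul_inv_mul a)).symm

theorem inv_eq_self (h : IsUniqueInverse ι) {e : M} (he : IsIdempotentElem e) : ι e = e :=
  (h.eq_inv e e (by rw [he.eq, he.eq]) (by rw [he.eq, he.eq])).symm

theorem isIdempotentElem_mul (h : IsUniqueInverse ι) {e f : M} (he : IsIdempotentElem e)
    (hf : IsIdempotentElem f) : IsIdempotentElem (e * f) := by
  set x := ι (e * f)
  -- `f * x * e` is another inverse of `e * f`; this forces `x`, hence `e * f = ι x`, to be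
  -- idempotent.
  have hx : f * x * e = x := by
    refine h.eq_inv (e * f) _ ?_ ?_
    · calc e * f * (f * x * e) * (e * f) = e * (f * f) * x * (e * e) * f := by ac_rfl
        _ = e * f * x * (e * f) := by rw [he.eq, hf.eq]; ac_rfl
        _ = e * f := h.mul_inv_mul _
    · calc f * x * e * (e * f) * (f * x * e) = f * (x * (e * e * (f * f)) * x) * e := by ac_rfl
        _ = f * x * e := by rw [he.eq, hf.eq, h.inv_mul_inv]
  have hxx : IsIdempotentElem x :=
    calc x * x = f * x * e * (f * x * e) := by rw [hx]
      _ = f * (x * (e * f) * x) * e := by ac_rfl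
      _ = x := by rw [h.inv_mul_inv, hx]
  rw [← h.inv_inv (e * f), h.inv_eq_self hxx]
  exact hxx

theorem commute_of_isIdempotentElem (h : IsUniqueInverse ι) {e f : M}
    (he : IsIdempotentElem e) (hf : IsIdempotentElem f) : Commute e f := by
  have hef := h.isIdempotentElem_mul he hf
  have hfe := h.isIdempotentElem_mul hf he
  have : f * e = ι (e * f) := by
    refine h.eq_inv (e * f) _ ?_ ?_
    · calc e * f * (f * e) * (e * f) = e * (f * f) * (e * e) * f := by ac_rfl
        _ = e * f * (e * f) := by rw [he.eq, hf.eq]; ac_rfl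
        _ = e * f := hef.eq
    · calc f * e * (e * f) * (f * e) = f * (e * e) * (f * f) * e := by ac_rfl
        _ = f * e * (f * e) := by rw [he.eq, hf.eq]; ac_rfl
        _ = f * e := hfe.eq
  rw [Commute, SemiconjBy, this, h.inv_eq_self hef]

theorem isIdempotentElem_mul_inv (h : IsUniqueInverse ι) (a : M) :
    IsIdempotentElem (a * ι a) := by
  rw [IsIdempotentElem, ← mul_assoc, h.mul_inv_mul]

theorem isIdempotentElem_inv_mul (h : IsUniqueInverse ι) (a : M) :
    IsIdempotentElem (ι a * a) := by
  rw [IsIdempotentElem, ← mul_assoc, h.inv_mul_inv]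

theorem mul_inv_rev (h : IsUniqueInverse ι) (a b : M) : ι (a * b) = ι b * ι a := by
  have hcomm := h.commute_of_isIdempotentElem (h.isIdempotentElem_mul_inv b)
    (h.isIdempotentElem_inv_mul a)
  refine (h.eq_inv (a * b) _ ?_ ?_).symm
  · calc a * b * (ι b * ι a) * (a * b) = a * ((b * ι b) * (ι a * a)) * b := by ac_rfl
      _ = a * ι a * a * (b * ι b * b) := by rw [hcomm.eq]; ac_rfl
      _ = a * b := by rw [h.mul_inv_mul, h.mul_inv_mul]
  · calc ι b * ι a * (a * b) * (ι b * ι a) = ι b * ((ι a * a) * (b * ι b)) * ι a := by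
          ac_rfl
      _ = ι b * b * ι b * (ι a * a * ι a) := by rw [← hcomm.eq]; ac_rfl
      _ = ι b * ι a := by rw [h.inv_mul_inv, h.inv_mul_inv]

end IsUniqueInverse

namespace InvSgpd
variable {S O : Type*} (G : InvSgpd S O)

theorem inv_inv (s : S) : G.inv (G.inv s) = s :=
  (G.inv_unique (G.inv s) s (G.inv_comp s) (G.comp_inv s) (G.inv_mul_inv s)
    (G.mul_inv_mul s)).symm

variable {G}

theorem Idem.inv_eq {e : S} (he : G.Idem e) : G.inv e = e :=
  (G.inv_unique e e he.1 he.1 (by rw [he.2, he.2]) (by rw [he.2, he.2])).symm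

theorem Idem.inv_mul_self {e : S} (he : G.Idem e) : G.mul (G.inv e) e = e := by
  rw [he.inv_eq, he.2]

variable (G)

theorem idem_inv_mul (s : S) : G.Idem (G.mul (G.inv s) s) := by
  refine ⟨?_, ?_⟩
  · show G.d _ = G.c _
    rw [G.d_mul _ _ (G.inv_comp s), G.c_mul _ _ (G.inv_comp s), ← G.comp_inv]
  · rw [G.assoc _ _ _ (G.inv_comp s) (by rw [G.c_mul _ _ (G.inv_comp s), ← G.comp_inv]),
      ← G.assoc _ _ _ (G.comp_inv s) (G.inv_comp s), G.mul_inv_mul]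

/-- `S` with a zero `none` adjoined, the product of a non-composable pair being zero. This is an
inverse semigroup, so the semigroup facts above apply to it without composability bookkeeping. -/
def ZeroExt (_ : InvSgpd S O) : Type _ := Option S

def incl (s : S) : G.ZeroExt := some s

open Classical in
noncomputable instance : Mul G.ZeroExt where
  mul
    | some a, some b => if G.Composable a b then some (G.mul a b) else none
    | _, _ => none

instance : Inv G.ZeroExt := ⟨Option.map G.inv⟩

instance : Zero G.ZeroExt := ⟨none⟩

variable {G}

theorem composable_mul_left_iff {a b c : S} (h : G.Composable a b) :
    G.Composable (G.mul a b) c ↔ G.Composable b c := by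
  rw [Composable, Composable, G.d_mul _ _ h]

theorem composable_mul_right_iff {a b c : S} (h : G.Composable b c) :
    G.Composable a (G.mul b c) ↔ G.Composable a b := by
  rw [Composable, Composable, G.c_mul _ _ h]

theorem incl_injective : Function.Injective G.incl := Option.some_injective S

theorem incl_ne_zero (a : S) : G.incl a ≠ 0 := Option.some_ne_none a

theorem eq_zero_or_eq_incl (x : G.ZeroExt) : x = 0 ∨ ∃ a, x = G.incl a := by
  rcases x with _ | a
  exacts [Or.inl rfl, Or.inr ⟨a, rfl⟩]

theorem incl_mul_incl {a b : S} (h : G.Composable a b) :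
    G.incl a * G.incl b = G.incl (G.mul a b) :=
  if_pos h

theorem incl_mul_incl_of_not_composable {a b : S} (h : ¬ G.Composable a b) :
    G.incl a * G.incl b = 0 :=
  if_neg h

theorem inv_incl (a : S) : (G.incl a)⁻¹ = G.incl (G.inv a) := rfl

protected theorem zero_mul (x : G.ZeroExt) : 0 * x = 0 := rfl

protected theorem mul_zero (x : G.ZeroExt) : x * 0 = 0 := by
  rcases G.eq_zero_or_eq_incl x with rfl | ⟨a, rfl⟩ <;> rfl

noncomputable instance : Semigroup G.ZeroExt where
  mul_assoc x y z := by
    rcases G.eq_zero_or_eq_incl x with rfl | ⟨a, rfl⟩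
    · simp only [InvSgpd.zero_mul]
    rcases G.eq_zero_or_eq_incl y with rfl | ⟨b, rfl⟩
    · simp only [InvSgpd.zero_mul, InvSgpd.mul_zero]
    rcases G.eq_zero_or_eq_incl z with rfl | ⟨c, rfl⟩
    · simp only [InvSgpd.mul_zero]
    by_cases hab : G.Composable a b <;> by_cases hbc : G.Composable b c
    · rw [incl_mul_incl hab, incl_mul_incl hbc,
        incl_mul_incl ((composable_mul_left_iff hab).2 hbc),
        incl_mul_incl ((composable_mul_right_iff hbc).2 hab), G.assoc a b c hab hbc]
    · rw [incl_mul_incl hab, incl_mul_incl_of_not_composable hbc, InvSgpd.mul_zero,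
        incl_mul_incl_of_not_composable (mt (composable_mul_left_iff hab).1 hbc)]
    · rw [incl_mul_incl_of_not_composable hab, incl_mul_incl hbc, InvSgpd.zero_mul,
        incl_mul_incl_of_not_composable (mt (composable_mul_right_iff hbc).1 hab)]
    · rw [incl_mul_incl_of_not_composable hab, incl_mul_incl_of_not_composable hbc,
        InvSgpd.zero_mul, InvSgpd.mul_zero]

theorem incl_mul_incl_mul_incl {a b : S} (h : G.incl a * G.incl b * G.incl a = G.incl a) :
    G.Composable a b ∧ G.Composable b a ∧ G.mul (G.mul a b) a = a := by
  by_cases hab : G.Composable a b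
  · rw [incl_mul_incl hab] at h
    by_cases hba : G.Composable (G.mul a b) a
    · rw [incl_mul_incl hba] at h
      exact ⟨hab, (composable_mul_left_iff hab).1 hba, G.incl_injective h⟩
    · exact absurd h.symm (by rw [incl_mul_incl_of_not_composable hba]; exact G.incl_ne_zero a)
  · exact absurd h.symm (by rw [incl_mul_incl_of_not_composable hab]; exact G.incl_ne_zero a)

theorem isUniqueInverse_inv : IsUniqueInverse (Inv.inv : G.ZeroExt → G.ZeroExt) := by
  have mul_inv_mul : ∀ x : G.ZeroExt, x * x⁻¹ * x = x := by
    intro x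
    rcases G.eq_zero_or_eq_incl x with rfl | ⟨a, rfl⟩
    · rfl
    rw [inv_incl, incl_mul_incl (G.comp_inv a),
      incl_mul_incl ((composable_mul_left_iff (G.comp_inv a)).2 (G.inv_comp a)), G.mul_inv_mul]
  refine ⟨mul_inv_mul, fun x => ?_, fun x y h₁ h₂ => ?_⟩
  · rcases G.eq_zero_or_eq_incl x with rfl | ⟨a, rfl⟩
    · rfl
    simpa only [inv_incl, G.inv_inv] using mul_inv_mul (G.incl (G.inv a))
  · rcases G.eq_zero_or_eq_incl x with rfl | ⟨a, rfl⟩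
    · rwa [InvSgpd.mul_zero, InvSgpd.zero_mul, eq_comm] at h₂
    rcases G.eq_zero_or_eq_incl y with rfl | ⟨b, rfl⟩
    · rw [InvSgpd.mul_zero, InvSgpd.zero_mul] at h₁
      exact absurd h₁.symm (G.incl_ne_zero a)
    obtain ⟨hab, hba, h₁⟩ := incl_mul_incl_mul_incl h₁
    obtain ⟨-, -, h₂⟩ := incl_mul_incl_mul_incl h₂
    rw [inv_incl, G.inv_unique a b hab hba h₁ h₂]

theorem mul_inv_rev {a b : S} (h : G.Composable a b) :
    G.inv (G.mul a b) = G.mul (G.inv b) (G.inv a) := by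
  have hinv : G.Composable (G.inv b) (G.inv a) := by
    rw [Composable, G.inv_comp, ← G.comp_inv]
    exact h.symm
  apply G.incl_injective
  rw [← incl_mul_incl hinv, ← inv_incl, ← inv_incl, ← inv_incl, ← incl_mul_incl h]
  exact G.isUniqueInverse_inv.mul_inv_rev _ _

theorem inv_mul_self_of_mul {s p : S} (h : G.Composable s p) :
    G.mul (G.inv (G.mul s p)) (G.mul s p) = G.mul (G.inv p) (G.mul (G.mul (G.inv s) s) p) := by
  rw [mul_inv_rev h, G.assoc _ _ _ (by rw [G.inv_comp, ← G.comp_inv]; exact h.symm)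
    (by rw [G.inv_comp, G.c_mul _ _ h]), ← G.assoc _ _ _ (G.inv_comp s) h]

end InvSgpd

namespace PAction
variable {S O X : Type*} {G : InvSgpd S O} (θ : PAction G X)

theorem act_mul_of_mem {s t : S} {z : X} (h : G.Composable s t)
    (hst : z ∈ θ.dom (G.inv (G.mul s t))) (ht : z ∈ θ.dom (G.inv t)) :
    θ.act t z ∈ θ.dom (G.inv s) ∧ θ.act s (θ.act t z) = θ.act (G.mul s t) z := by
  have hz : z ∈ {x | x ∈ θ.dom (G.inv t) ∧ θ.act t x ∈ θ.dom t ∩ θ.dom (G.inv s)} :=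
    (θ.preimage_eq s t h).symm ▸ ⟨hst, ht⟩
  exact ⟨hz.2.2, θ.mul_act s t h z ⟨hst, ht⟩⟩

theorem act_inv_act {s : S} {x : X} (hx : x ∈ θ.dom (G.inv s)) :
    θ.act (G.inv s) (θ.act s x) = x := by
  have hss : x ∈ θ.dom (G.mul (G.inv s) s) := by
    simpa only [G.inv_inv] using θ.dom_mono (G.inv s) hx
  have hss' : x ∈ θ.dom (G.inv (G.mul (G.inv s) s)) := by
    rwa [(G.idem_inv_mul s).inv_eq]
  rw [(θ.act_mul_of_mem (G.inv_comp s) hss' hx).2, θ.idem_id _ (G.idem_inv_mul s) x hss]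

theorem mem_dom_inv_and_act_of_idem (p : θ.Dset) (he : G.Idem p.1.1) :
    p.1.2 ∈ θ.dom (G.inv p.1.1) ∧ θ.act p.1.1 p.1.2 = p.1.2 := by
  have hp : p.1.2 ∈ θ.dom p.1.1 := he.inv_mul_self ▸ p.2
  exact ⟨by rwa [he.inv_eq], θ.idem_id _ he _ hp⟩

theorem rel_one_symm {s t : S} {x y : X} (hc : G.Composable (G.inv t) s)
    (hx : x ∈ θ.dom (G.mul (G.inv s) t)) (hy : θ.act (G.mul (G.inv t) s) x = y) :
    G.Composable (G.inv s) t ∧ y ∈ θ.dom (G.mul (G.inv t) s) ∧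
      θ.act (G.mul (G.inv s) t) y = x := by
  subst hy
  have hx' : x ∈ θ.dom (G.inv (G.mul (G.inv t) s)) := by
    rwa [G.mul_inv_rev hc, G.inv_inv]
  refine ⟨(G.inv_comp s).trans (hc.symm.trans (G.inv_comp t)), θ.maps _ x hx', ?_⟩
  simpa only [G.mul_inv_rev hc, G.inv_inv] using θ.act_inv_act hx'

theorem act_eq_of_rel_one {s t : S} {x y : X} (hc : G.Composable (G.inv t) s)
    (hx : x ∈ θ.dom (G.mul (G.inv s) t)) (hy : θ.act (G.mul (G.inv t) s) x = y)
    (hxs : x ∈ θ.dom (G.inv s)) : y ∈ θ.dom (G.inv t) ∧ θ.act t y = θ.act s x := by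
  subst hy
  have hx' : x ∈ θ.dom (G.inv (G.mul (G.inv t) s)) := by
    rwa [G.mul_inv_rev hc, G.inv_inv]
  obtain ⟨hw, hwy⟩ := θ.act_mul_of_mem hc hx' hxs
  rw [← hwy]
  refine ⟨θ.maps _ _ hw, ?_⟩
  simpa only [G.inv_inv] using θ.act_inv_act hw

theorem rel_symm {p q : θ.Dset} (h : θ.rel p q) : θ.rel q p := by
  rcases h with ⟨hc, hx, hy⟩ | ⟨hp, hq, hxy⟩
  exacts [Or.inl (θ.rel_one_symm hc hx hy), Or.inr ⟨hq, hp, hxy.symm⟩]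

theorem mem_dom_inv_of_rel {p q : θ.Dset} (h : θ.rel p q)
    (hp : p.1.2 ∈ θ.dom (G.inv p.1.1)) :
    q.1.2 ∈ θ.dom (G.inv q.1.1) ∧ θ.act q.1.1 q.1.2 = θ.act p.1.1 p.1.2 := by
  rcases h with ⟨hc, hx, hy⟩ | ⟨hpi, hqi, hxy⟩
  · exact θ.act_eq_of_rel_one hc hx hy hp
  · rw [(θ.mem_dom_inv_and_act_of_idem p hpi).2, (θ.mem_dom_inv_and_act_of_idem q hqi).2, hxy]
    exact ⟨(θ.mem_dom_inv_and_act_of_idem q hqi).1, rfl⟩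

def eval (p : θ.Dset) : Part X := ⟨p.1.2 ∈ θ.dom (G.inv p.1.1), fun _ => θ.act p.1.1 p.1.2⟩

theorem mem_eval {p : θ.Dset} {y : X} :
    y ∈ θ.eval p ↔ p.1.2 ∈ θ.dom (G.inv p.1.1) ∧ θ.act p.1.1 p.1.2 = y :=
  ⟨fun ⟨h, e⟩ => ⟨h, e⟩, fun ⟨h, e⟩ => ⟨h, e⟩⟩

theorem eval_eq_of_rel {p q : θ.Dset} (h : θ.rel p q) : θ.eval p = θ.eval q := by
  have mem_of_rel : ∀ {p q : θ.Dset}, θ.rel p q →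
      ∀ y, y ∈ θ.eval p → y ∈ θ.eval q := by
    rintro p q h y ⟨hp, rfl⟩
    exact θ.mem_eval.2 (θ.mem_dom_inv_of_rel h hp)
  exact Part.ext fun y => ⟨mem_of_rel h y, mem_of_rel (θ.rel_symm h) y⟩

theorem eval_eq_of_mk_eq {p q : θ.Dset}
    (h : Quotient.mk θ.relSetoid p = Quotient.mk θ.relSetoid q) : θ.eval p = θ.eval q :=
  Relation.EqvGen.eqvGen_le (r' := Setoid.ker θ.eval) (fun _ _ => θ.eval_eq_of_rel) _ _
    (Quotient.exact h)

theorem act_eq_of_mk_eq_idem {s f : S} {x y : X} (hf : G.Idem f)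
    (hx : x ∈ θ.dom (G.mul (G.inv s) s)) (hy : y ∈ θ.dom (G.mul (G.inv f) f))
    (h : Quotient.mk θ.relSetoid ⟨(s, x), hx⟩ = Quotient.mk θ.relSetoid ⟨(f, y), hy⟩) :
    x ∈ θ.dom (G.inv s) ∧ θ.act s x = y := by
  have hy' : y ∈ θ.eval ⟨(f, y), hy⟩ := θ.mem_eval.2 (θ.mem_dom_inv_and_act_of_idem _ hf)
  rw [← θ.eval_eq_of_mk_eq h] at hy'
  exact θ.mem_eval.1 hy'

end PAction

/-- For the constructed globalization `(E, η)` (any partial action on `E = D/≈`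
whose domains are the `E_s` and whose action is induced by `(p,x) ↦ (sp,x)`),
the map `i : X → E`, `x ↦ [e,x]` (for `e` idempotent with `x ∈ X_e`), is
injective and `η` induces `θ` through `i`: if `i(x) ∈ E_{s*}` and
`η_s(i(x)) = i(y)` then `x ∈ X_{s*}` and `θ_s(x) = y`.  Hence `(i, E, η)` is a
globalization of `(X, θ)`. -/
theorem globalization_embeds {S O X : Type*} (G : InvSgpd S O) (θ : PAction G X)
    (P : PAction G θ.Env)
    (hdom : ∀ s, P.dom s = θ.Eset s)
    (hact : ∀ (s : S) (p : θ.Dset), G.Composable s p.1.1 →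
      ∀ hm : p.1.2 ∈ θ.dom (G.mul (G.inv (G.mul s p.1.1)) (G.mul s p.1.1)),
        P.act s (Quotient.mk θ.relSetoid p)
          = Quotient.mk θ.relSetoid ⟨(G.mul s p.1.1, p.1.2), hm⟩) :
    -- `i` is injective:
    (∀ (x y : X) (e f : S), G.Idem e → G.Idem f → x ∈ θ.dom e → y ∈ θ.dom f →
      ∀ (hx : x ∈ θ.dom (G.mul (G.inv e) e)) (hy : y ∈ θ.dom (G.mul (G.inv f) f)),
        Quotient.mk θ.relSetoid ⟨(e, x), hx⟩ = Quotient.mk θ.relSetoid ⟨(f, y), hy⟩ →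
        x = y) ∧
    -- `η` induces `θ` through `i`:
    (∀ (s : S) (x y : X) (e f : S), G.Idem e → G.Idem f →
      x ∈ θ.dom e → y ∈ θ.dom f →
      ∀ (hx : x ∈ θ.dom (G.mul (G.inv e) e)) (hy : y ∈ θ.dom (G.mul (G.inv f) f)),
        Quotient.mk θ.relSetoid ⟨(e, x), hx⟩ ∈ P.dom (G.inv s) →
        P.act s (Quotient.mk θ.relSetoid ⟨(e, x), hx⟩)
          = Quotient.mk θ.relSetoid ⟨(f, y), hy⟩ →
        x ∈ θ.dom (G.inv s) ∧ θ.act s x = y) := by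
  refine ⟨fun x y e f he hf _ _ hx hy h => ?_, fun s x y e f he hf _ _ hx hy hmem hη => ?_⟩
  · obtain ⟨-, hxy⟩ := θ.act_eq_of_mk_eq_idem hf hx hy h
    rwa [(θ.mem_dom_inv_and_act_of_idem ⟨(e, x), hx⟩ he).2] at hxy
  · rw [hdom] at hmem
    obtain ⟨⟨⟨p, z⟩, hz⟩, hpz, hc, hd⟩ := hmem
    rw [G.inv_inv] at hc hd
    have hm : z ∈ θ.dom (G.mul (G.inv (G.mul s p)) (G.mul s p)) := by
      rwa [G.inv_mul_self_of_mul hc]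
    rw [← hpz, hact s _ hc hm] at hη
    obtain ⟨hz₁, rfl⟩ := θ.act_eq_of_mk_eq_idem hf hm hy hη
    obtain ⟨hz₂, rfl⟩ := θ.act_eq_of_mk_eq_idem he hz hx hpz
    exact θ.act_mul_of_mem hc hz₁ hz₂
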